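/- arXiv:2107.10903 — 4 statements merged into one kernel-verified Lean document; each statement's English description precedes it below -/
import Mathlib

section
/- For any graded homogeneous elements of the graded Lie algebra U_1 with homogeneous degrees a, b, c ∈ ℤ, the polynomial α[x₁,x₂,x₃] − β[x₁,x₃,x₂], where α = (c−a)(b−c−a) and β = (b−a)(c−b−a), vanishes identically; i.e., for all homogeneous u ∈ L_a, v ∈ L_b, w ∈ L_c in U_1 one has α[[u,v],w] = β[[u,w],v]. -/
/-- In the ℤ-graded Lie algebra `U₁` (basis `e_n`, `[e_i,e_j] = (j-i)e_{i+j}`,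
components `L_i = K·e_i`), for homogeneous `u ∈ L_a`, `v ∈ L_b`, `w ∈ L_c` one has
`α[[u,v],w] = β[[u,w],v]` where `α = (c−a)(b−c−a)`, `β = (b−a)(c−b−a)`. -/
theorem stmt_2 {K L : Type*} [Field K] [CharZero K] [LieRing L] [LieAlgebra K L]
    (e : ℤ → L)
    (hbr : ∀ i j : ℤ, ⁅e i, e j⁆ = ((j - i : ℤ) : K) • e (i + j))
    (a b c : ℤ) (u v w : L)
    (hu : u ∈ Submodule.span K {e a}) (hv : v ∈ Submodule.span K {e b})
    (hw : w ∈ Submodule.span K {e c}) :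
    (((c - a) * (b - c - a) : ℤ) : K) • ⁅⁅u, v⁆, w⁆ =
      (((b - a) * (c - b - a) : ℤ) : K) • ⁅⁅u, w⁆, v⁆ := by
  rw [Submodule.mem_span_singleton] at hu hv hw
  obtain ⟨x, rfl⟩ := hu
  obtain ⟨y, rfl⟩ := hv
  obtain ⟨z, rfl⟩ := hw
  simp only [lie_smul, smul_lie, hbr, smul_smul]
  rw [show a + c + b = a + b + c by ring]
  congr 1
  push_cast
  ring
end

section
/- The identity [x₁,x₂,x₃,x₄] + [x₂,x₁,x₄,x₃] + [x₄,x₃,x₂,x₁] + [x₃,x₄,x₁,x₂] = 0 holds in every Lie algebra, where commutators are left-normed. -/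
lemma key_pair {L : Type*} [LieRing L] (a b c d : L) :
    ⁅⁅⁅a, b⁆, c⁆, d⁆ + ⁅⁅⁅b, a⁆, d⁆, c⁆ = ⁅⁅a, b⁆, ⁅c, d⁆⁆ := by
  rw [← lie_skew b a, neg_lie, neg_lie, leibniz_lie ⁅a, b⁆ c d,
    ← lie_skew c ⁅⁅a, b⁆, d⁆]

/-- The left-normed identity
`[x₁,x₂,x₃,x₄] + [x₂,x₁,x₄,x₃] + [x₄,x₃,x₂,x₁] + [x₃,x₄,x₁,x₂] = 0`
holds in every Lie algebra. -/
theorem stmt_5 {L : Type*} [LieRing L] (x₁ x₂ x₃ x₄ : L) :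
    ⁅⁅⁅x₁, x₂⁆, x₃⁆, x₄⁆ + ⁅⁅⁅x₂, x₁⁆, x₄⁆, x₃⁆ + ⁅⁅⁅x₄, x₃⁆, x₂⁆, x₁⁆ +
      ⁅⁅⁅x₃, x₄⁆, x₁⁆, x₂⁆ = 0 := by
  rw [add_assoc, key_pair x₁ x₂ x₃ x₄, key_pair x₄ x₃ x₂ x₁,
    ← lie_skew ⁅x₄, x₃⁆ ⁅x₂, x₁⁆, ← lie_skew x₂ x₁, ← lie_skew x₄ x₃,
    neg_lie, lie_neg, neg_neg, add_neg_cancel]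
end

section
/- Let L be a G-graded Lie algebra with dim L_g ≤ 1 for all g, over an infinite field K. If M₁ and M₂ are left-normed Lie monomials in graded variables whose sequences of variable degrees coincide (h(M₁) = h(M₂)), then M₁ is a graded identity of L if and only if M₂ is a graded identity of L. -/
/-!
A left-normed monomial is multilinear, so scalars can be pulled out of every slot. When each
homogeneous component `L_g` is spanned by a single element `e g`, every graded substitution is
therefore a scalar multiple of the substitution `x_k ↦ e (deg x_k)`. Hence `M` is a graded
identity iff it vanishes at that one substitution, whose value depends only on `h(M)`.
-/

def leftNormed {L : Type*} [LieRing L] : List L → L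
  | [] => 0
  | a :: t => t.foldl (fun u v => ⁅u, v⁆) a

section LeftNormed

variable {K L : Type*} [CommRing K] [LieRing L] [LieAlgebra K L]

lemma foldl_lie_map_smul (l : List (K × L)) (c : K) (u : L) :
    (l.map fun p => p.1 • p.2).foldl (fun x y => ⁅x, y⁆) (c • u) =
      (c * (l.map Prod.fst).prod) • (l.map Prod.snd).foldl (fun x y => ⁅x, y⁆) u := by
  induction l generalizing c u with
  | nil => simp
  | cons p t ih =>
    simp only [List.map_cons, List.foldl_cons, List.prod_cons]
    rw [smul_lie, lie_smul, smul_smul, ih, mul_assoc]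

lemma leftNormed_map_smul (l : List (K × L)) :
    leftNormed (l.map fun p => p.1 • p.2) =
      (l.map Prod.fst).prod • leftNormed (l.map Prod.snd) := by
  cases l with
  | nil => simp [leftNormed]
  | cons p t => exact foldl_lie_map_smul t p.1 p.2

lemma leftNormed_ofFn_smul {n : ℕ} (β : Fin n → K) (e : Fin n → L) :
    leftNormed (List.ofFn fun k => β k • e k) = (∏ k, β k) • leftNormed (List.ofFn e) := by
  simpa [List.map_ofFn, Function.comp_def, List.prod_ofFn] using
    leftNormed_map_smul (List.ofFn fun k => (β k, e k))

lemma forall_leftNormed_eq_zero_iff {G : Type*} (Lg : G → Submodule K L) (e : G → L)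
    (he : ∀ g, e g ∈ Lg g) (hspan : ∀ g, ∀ x ∈ Lg g, ∃ c : K, c • e g = x)
    {n r : ℕ} (i : Fin n → Fin r) (gd : Fin r → G) :
    (∀ a : Fin r → L, (∀ k, a k ∈ Lg (gd k)) → leftNormed (List.ofFn (a ∘ i)) = 0) ↔
      leftNormed (List.ofFn (e ∘ gd ∘ i)) = 0 := by
  refine ⟨fun h => h (e ∘ gd) fun k => he (gd k), fun h a ha => ?_⟩
  choose β hβ using fun k => hspan (gd (i k)) (a (i k)) (ha (i k))
  have ha_eq : a ∘ i = fun k => β k • e (gd (i k)) := funext fun k => (hβ k).symm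
  rw [ha_eq, leftNormed_ofFn_smul]
  exact (congrArg _ h).trans (smul_zero _)

end LeftNormed

theorem stmt_12_general {K G L : Type*} [Field K]
    [LieRing L] [LieAlgebra K L]
    (Lg : G → Submodule K L) (hdim : ∀ g, Module.rank K (Lg g) ≤ 1)
    {n r₁ r₂ : ℕ} (i₁ : Fin n → Fin r₁) (i₂ : Fin n → Fin r₂)
    (gd₁ : Fin r₁ → G) (gd₂ : Fin r₂ → G)
    (hdeg : gd₁ ∘ i₁ = gd₂ ∘ i₂) :
    ((∀ a : Fin r₁ → L, (∀ k, a k ∈ Lg (gd₁ k)) →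
        leftNormed (List.ofFn (a ∘ i₁)) = 0) ↔
      (∀ a : Fin r₂ → L, (∀ k, a k ∈ Lg (gd₂ k)) →
        leftNormed (List.ofFn (a ∘ i₂)) = 0)) := by
  choose e he using fun g => rank_le_one_iff.mp (hdim g)
  have hspan : ∀ g, ∀ x ∈ Lg g, ∃ c : K, c • (e g : L) = x := fun g x hx =>
    (he g ⟨x, hx⟩).imp fun c hc => congrArg Subtype.val hc
  rw [forall_leftNormed_eq_zero_iff Lg _ (fun g => (e g).2) hspan,
    forall_leftNormed_eq_zero_iff Lg _ (fun g => (e g).2) hspan, hdeg]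

/-- Let `L` be a `G`-graded Lie algebra over an infinite field of characteristic ≠ 2
with `dim L_g ≤ 1` for all `g`. If two left-normed Lie monomials in graded variables
(with variable index maps `i₁`, `i₂` and variable degrees `gd₁`, `gd₂`) have the same
sequence of variable degrees, then one is a graded identity of `L` iff the other is. -/
theorem stmt_12 {K G L : Type*} [Field K] [Infinite K] (hchar : ringChar K ≠ 2)
    [Group G] [LieRing L] [LieAlgebra K L]
    (Lg : G → Submodule K L) (hdim : ∀ g, Module.rank K (Lg g) ≤ 1)
    (hgr : ∀ g h : G, ∀ x ∈ Lg g, ∀ y ∈ Lg h, ⁅x, y⁆ ∈ Lg (g * h))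
    {n r₁ r₂ : ℕ} (i₁ : Fin n → Fin r₁) (i₂ : Fin n → Fin r₂)
    (gd₁ : Fin r₁ → G) (gd₂ : Fin r₂ → G)
    (hdeg : gd₁ ∘ i₁ = gd₂ ∘ i₂) :
    ((∀ a : Fin r₁ → L, (∀ k, a k ∈ Lg (gd₁ k)) →
        leftNormed (List.ofFn (a ∘ i₁)) = 0) ↔
      (∀ a : Fin r₂ → L, (∀ k, a k ∈ Lg (gd₂ k)) →
        leftNormed (List.ofFn (a ∘ i₂)) = 0)) :=
  stmt_12_general Lg hdim i₁ i₂ gd₁ gd₂ hdeg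
end

section
/- In U_1 with its ℤ-grading, for homogeneous elements of degrees g₁,...,g_n with n ≥ 2, the left-normed monomial [x₁,...,x_n] is a graded identity of U_1 if and only if either [x₁,...,x_{n−1}] is a graded identity, or (g₁ + ⋯ + g_{n−1}) = g_n. -/
lemma leftNormed_append_singleton {L : Type*} [LieRing L] (a : L) (t : List L) (v : L) :
    leftNormed ((a :: t) ++ [v]) = ⁅leftNormed (a :: t), v⁆ := by
  simp [leftNormed, List.foldl_append]

lemma leftNormed_ofFn_succ {L : Type*} [LieRing L] {m : ℕ} (x : Fin (m + 2) → L) :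
    leftNormed (List.ofFn x) =
      ⁅leftNormed (List.ofFn (fun i : Fin (m + 1) => x i.castSucc)), x (Fin.last (m + 1))⁆ := by
  rw [List.ofFn_succ' x, List.concat_eq_append, List.ofFn_succ]
  exact leftNormed_append_singleton _ _ _

lemma leftNormed_smul {K L : Type*} [Field K] [LieRing L] [LieAlgebra K L]
    (m : ℕ) (c : Fin (m + 1) → K) (y : Fin (m + 1) → L) :
    leftNormed (List.ofFn (fun i => c i • y i)) = (∏ i, c i) • leftNormed (List.ofFn y) := by
  induction m with
  | zero => simp [leftNormed]
  | succ m ih =>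
      rw [leftNormed_ofFn_succ, leftNormed_ofFn_succ y]
      have := ih (fun i => c i.castSucc) (fun i => y i.castSucc)
      rw [show (fun i : Fin (m + 1) => (fun j => c j • y j) i.castSucc)
            = fun i : Fin (m + 1) => c i.castSucc • y i.castSucc from rfl, this,
        smul_lie, lie_smul, smul_smul, ← Fin.prod_univ_castSucc]

lemma leftNormed_e {K L : Type*} [Field K] [LieRing L] [LieAlgebra K L]
    (e : ℤ → L) (hbr : ∀ i j : ℤ, ⁅e i, e j⁆ = ((j - i : ℤ) : K) • e (i + j))
    (m : ℕ) (g : Fin (m + 1) → ℤ) :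
    ∃ lam : K, leftNormed (List.ofFn (fun i => e (g i))) = lam • e (∑ i, g i) := by
  induction m with
  | zero => exact ⟨1, by simp [leftNormed]⟩
  | succ m ih =>
      obtain ⟨lam, hlam⟩ := ih (fun i => g i.castSucc)
      refine ⟨lam * ((g (Fin.last (m + 1)) - ∑ i : Fin (m + 1), g i.castSucc : ℤ) : K), ?_⟩
      rw [leftNormed_ofFn_succ, show (fun i : Fin (m + 1) => (fun j => e (g j)) i.castSucc)
            = fun i : Fin (m + 1) => e ((fun j : Fin (m+1) => g j.castSucc) i) from rfl, hlam,
        smul_lie, hbr, smul_smul, Fin.sum_univ_castSucc (f := g), ← Fin.sum_univ_castSucc]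

/-- In the ℤ-graded Lie algebra `U₁`, for degrees `g₁,...,g_{n}` (`n ≥ 2`, here `n+2`
variables), the left-normed monomial `[x₁,...,x_n]` is a graded identity of `U₁` iff
either `[x₁,...,x_{n−1}]` is a graded identity, or `g₁ + ⋯ + g_{n−1} = g_n`. -/
theorem stmt_13 {K L : Type*} [Field K] [CharZero K] [LieRing L] [LieAlgebra K L]
    (e : ℤ → L) (hli : LinearIndependent K e)
    (hbr : ∀ i j : ℤ, ⁅e i, e j⁆ = ((j - i : ℤ) : K) • e (i + j))
    (n : ℕ) (g : Fin (n + 2) → ℤ) :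
    (∀ x : Fin (n + 2) → L, (∀ i, x i ∈ Submodule.span K {e (g i)}) →
        leftNormed (List.ofFn x) = 0) ↔
      ((∀ x : Fin (n + 1) → L,
          (∀ i : Fin (n + 1), x i ∈ Submodule.span K {e (g i.castSucc)}) →
          leftNormed (List.ofFn x) = 0) ∨
        (∑ i : Fin (n + 1), g i.castSucc) = g (Fin.last (n + 1))) := by
  obtain ⟨lam, hlam⟩ := leftNormed_e e hbr n (fun i : Fin (n + 1) => g i.castSucc)
  set S : ℤ := ∑ i : Fin (n + 1), g i.castSucc with hS
  have hne : ∀ d : ℤ, e d ≠ 0 := fun d => hli.ne_zero d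
  constructor
  · intro h
    have h0 := h (fun i => e (g i)) (fun i => Submodule.mem_span_singleton_self _)
    rw [leftNormed_ofFn_succ, show (fun i : Fin (n + 1) => (fun j => e (g j)) i.castSucc)
          = fun i : Fin (n + 1) => e (g i.castSucc) from rfl, hlam,
        smul_lie, hbr, smul_smul] at h0
    rcases (smul_eq_zero.mp h0).resolve_right (hne _) |> mul_eq_zero.mp with h1 | h1
    · left
      intro x hx
      choose c hc using fun i => Submodule.mem_span_singleton.mp (hx i)
      have hx' : x = fun i => c i • e (g i.castSucc) := funext fun i => (hc i).symm
      rw [hx', leftNormed_smul, hlam, h1, zero_smul, smul_zero]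
    · right
      have : (g (Fin.last (n + 1)) - S : ℤ) = 0 := by exact_mod_cast h1
      omega
  · intro h x hx
    choose c hc using fun i => Submodule.mem_span_singleton.mp (hx i)
    have hx' : x = fun i => c i • e (g i) := funext fun i => (hc i).symm
    rw [hx', leftNormed_smul, leftNormed_ofFn_succ,
        show (fun i : Fin (n + 1) => (fun j => e (g j)) i.castSucc)
          = fun i : Fin (n + 1) => e (g i.castSucc) from rfl, hlam, smul_lie, hbr]
    rcases h with h | h
    · have h0 := h (fun i => e (g i.castSucc)) (fun i => Submodule.mem_span_singleton_self _)
      rw [hlam] at h0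
      have : lam = 0 := (smul_eq_zero.mp h0).resolve_right (hne _)
      simp [this]
    · have : ((g (Fin.last (n + 1)) - S : ℤ) : K) = 0 := by rw [← h]; simp
      rw [this]
      simp
end
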